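/- In ℙℝ₀, suppose (d, π, F) is a condition, f ∈ 0* with f ∉ F, and m is large enough that f↾m ≠ g↾m for all g ∈ F and f(n) = 0 for n ≥ m, and |d| ≥ m. Let n = |d|, d′ = d⌢1, and define π′_n with domain {g↾n : g ∈ F ∪ {f}} by π′_n(g↾n) = g(n) for g ∈ F and π′_n(f↾n) = 1. Then π′_n is well-defined (the assignment does not depend on the representative g), and (d′, π⌢π′_n, F) is a condition of ℙℝ₀ extending (d, π, F). -/
import Mathlib


open Filter Set

def restr (f : ℕ → ℕ) (n : ℕ) : ℕ → ℕ := fun i => if i < n then f i else 0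

def EvZero (f : ℕ → ℕ) : Prop := ∀ᶠ n in atTop, f n = 0

structure Predictor where
  D : Set ℕ
  Dinf : D.Infinite
  p : ℕ → (ℕ → ℕ) → ℕ

def Predicts (π : Predictor) (f : ℕ → ℕ) : Prop :=
  ∀ᶠ n in atTop, n ∈ π.D → f n = π.p n (restr f n)

def ZPredicts (π : Predictor) (f : ℕ → ℕ) : Prop :=
  (¬ EvZero f ∧ Predicts π f) ∨ (EvZero f ∧ ¬ Predicts π f)

def listOf (f : ℕ → ℕ) (n : ℕ) : List ℕ := (List.range n).map f

structure PRCond where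
  len : ℕ
  ones : Finset ℕ
  ones_lt : ∀ n ∈ ones, n < len
  p : ℕ → List ℕ → Option ℕ
  p_dom : ∀ n σ, p n σ ≠ none → n ∈ ones ∧ σ.length = n
  p_fin : ∀ n, Set.Finite {σ : List ℕ | p n σ ≠ none}
  F : Set (ℕ → ℕ)
  F_fin : F.Finite
  F_sep : ∀ f ∈ F, ∀ g ∈ F, listOf f len = listOf g len → f = g

def PRle (q p : PRCond) : Prop :=
  p.len ≤ q.len ∧
  (∀ n ∈ p.ones, n ∈ q.ones) ∧
  (∀ n ∈ q.ones, n < p.len → n ∈ p.ones) ∧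
  (∀ n ∈ p.ones, ∀ σ v, p.p n σ = some v → q.p n σ = some v) ∧
  p.F ⊆ q.F ∧
  ∀ n ∈ q.ones, n ∉ p.ones → ∀ f ∈ p.F, q.p n (listOf f n) = some (f n)

lemma listOf_eq_iff {f g : ℕ → ℕ} {n : ℕ} :
    listOf f n = listOf g n ↔ ∀ i < n, f i = g i := by
  unfold listOf
  rw [List.map_eq_map_iff]
  simp [List.mem_range]

theorem stmt8 (c : PRCond) (hc : ∀ g ∈ c.F, ¬ EvZero g)
    (f : ℕ → ℕ) (hf : EvZero f) (hfF : f ∉ c.F) (m : ℕ)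
    (hm1 : ∀ g ∈ c.F, listOf f m ≠ listOf g m)
    (hm2 : ∀ n ≥ m, f n = 0) (hm3 : m ≤ c.len) :
    (∀ g ∈ insert f c.F, ∀ g' ∈ insert f c.F,
      listOf g c.len = listOf g' c.len → g = g') ∧
    ∃ c' : PRCond, c'.len = c.len + 1 ∧ c'.ones = insert c.len c.ones ∧
      c'.F = c.F ∧
      (∀ n ∈ c.ones, ∀ σ, c'.p n σ = c.p n σ) ∧
      (∀ g ∈ c.F, c'.p c.len (listOf g c.len) = some (g c.len)) ∧
      c'.p c.len (listOf f c.len) = some 1 ∧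
      PRle c' c := by
  classical
  have hpre : ∀ (g g' : ℕ → ℕ) (a b : ℕ), a ≤ b →
      listOf g b = listOf g' b → listOf g a = listOf g' a := by
    intro g g' a b hab h
    rw [listOf_eq_iff] at h ⊢
    intro i hi; exact h i (lt_of_lt_of_le hi hab)
  have hfne : ∀ g ∈ c.F, listOf f c.len ≠ listOf g c.len := by
    intro g hg h
    exact hm1 g hg (hpre f g m c.len hm3 h)
  constructor
  · intro g hg g' hg' h
    rcases hg with rfl | hg
    · rcases hg' with rfl | hg'
      · rfl
      · exact absurd h (hfne g' hg')
    · rcases hg' with rfl | hg'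
      · exact absurd h.symm (hfne g hg)
      · exact c.F_sep g hg g' hg' h
  · -- build c'
    set P : ℕ → List ℕ → Option ℕ := fun n σ =>
      if n = c.len then
        (if σ = listOf f c.len then some 1
         else if h : ∃ g, g ∈ c.F ∧ σ = listOf g c.len then some (h.choose c.len)
         else none)
      else c.p n σ with hP
    have hPold : ∀ n, n ≠ c.len → ∀ σ, P n σ = c.p n σ := by
      intro n hn σ; simp [hP, hn]
    have hPF : ∀ g ∈ c.F, P c.len (listOf g c.len) = some (g c.len) := by
      intro g hg
      have hex : ∃ g', g' ∈ c.F ∧ listOf g c.len = listOf g' c.len := ⟨g, hg, rfl⟩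
      have := hex.choose_spec
      have hgeq : hex.choose = g := c.F_sep _ this.1 g hg this.2.symm
      have h1 : listOf g c.len ≠ listOf f c.len := fun h => hfne g hg h.symm
      simp only [hP, if_pos rfl, if_neg h1, dif_pos hex, hgeq]
    have hPf : P c.len (listOf f c.len) = some 1 := by simp [hP]
    refine ⟨⟨c.len + 1, insert c.len c.ones, ?_, P, ?_, ?_, c.F, c.F_fin, ?_⟩,
      rfl, rfl, rfl, ?_, hPF, hPf, ?_⟩
    · intro n hn
      rcases Finset.mem_insert.1 hn with rfl | hn
      · omega
      · exact lt_trans (c.ones_lt n hn) (Nat.lt_succ_self _)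
    · intro n σ hne
      by_cases hn : n = c.len
      · subst hn
        refine ⟨Finset.mem_insert_self _ _, ?_⟩
        simp only [hP, if_pos rfl] at hne
        split_ifs at hne with h1 h2
        · simp [h1, listOf]
        · rw [h2.choose_spec.2]; simp [listOf]
        · exact absurd rfl hne
      · rw [hPold n hn σ] at hne
        exact ⟨Finset.mem_insert_of_mem (c.p_dom n σ hne).1, (c.p_dom n σ hne).2⟩
    · intro n
      by_cases hn : n = c.len
      · subst hn
        apply Set.Finite.subset
          (Set.Finite.insert (listOf f c.len) (c.F_fin.image (fun g => listOf g c.len)))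
        intro σ hσ
        simp only [hP, if_pos rfl, Set.mem_setOf_eq] at hσ
        split_ifs at hσ with h1 h2
        · simp [h1]
        · exact Set.mem_insert_of_mem _ ⟨h2.choose, h2.choose_spec.1, h2.choose_spec.2.symm⟩
        · simp at hσ
      · have : {σ : List ℕ | P n σ ≠ none} = {σ : List ℕ | c.p n σ ≠ none} := by
          ext σ; simp [hPold n hn σ]
        rw [this]; exact c.p_fin n
    · intro g hg g' hg' h
      exact c.F_sep g hg g' hg' (hpre g g' c.len (c.len + 1) (Nat.le_succ _) h)
    · intro n hn σ
      exact hPold n (by have := c.ones_lt n hn; omega) σ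
    · refine ⟨Nat.le_succ _, fun n hn => Finset.mem_insert_of_mem hn, ?_, ?_, subset_rfl, ?_⟩
      · intro n hn hlt
        rcases Finset.mem_insert.1 hn with rfl | hn
        · omega
        · exact hn
      · intro n hn σ v hv
        show P n σ = some v
        rw [hPold n (by have := c.ones_lt n hn; omega) σ]; exact hv
      · intro n hn hnot g hg
        rcases Finset.mem_insert.1 hn with rfl | hn
        · exact hPF g hg
        · exact absurd hn hnot
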